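/- Let q : ℝ × ℝ → ℝ be real-valued with q(·, t) integrable on ℝ for each t, and set U(y,t) := [[0, q(y,t)],[q(−y,−t), 0]]. Suppose Ψ : ℝ × ℝ × ℝ → M₂(ℂ) is bounded, continuous and satisfies the Volterra integral equation Ψ(x,t,k) = I + ∫_{−∞}^{x} e^{ik(y−x)σ̂₃}( U(y,t) Ψ(y,t,k) ) dy for all x, t ∈ ℝ and k ∈ ℝ. Then the function Ψ̃(x,t,k) := Λ · conj( Ψ(−x, −t, −k) ) · Λ⁻¹ satisfies the companion Volterra equation Ψ̃(x,t,k) = I − ∫_{x}^{∞} e^{ik(y−x)σ̂₃}( U(y,t) Ψ̃(y,t,k) ) dy for all x, t ∈ ℝ and k ∈ ℝ. (This is the symmetry, used in (2.9), that if Ψ solves (2.4a) then Λ·conj(Ψ(−x,−t,−k̄))·Λ⁻¹ solves (2.4b); for k ∈ ℝ, −k̄ = −k. The reality of q is the implicit reduction under which this conjugation symmetry holds.) -/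

import Mathlib

open Matrix MeasureTheory Set

noncomputable section

/-- Λ = [[0,-1],[1,0]]. -/
def Lam : Matrix (Fin 2) (Fin 2) ℂ := !![0, -1; 1, 0]

/-- Λ⁻¹ = [[0,1],[-1,0]]. -/
def LamInv : Matrix (Fin 2) (Fin 2) ℂ := !![0, 1; -1, 0]

/-- `e^{θσ̂₃}A = e^{θσ₃} A e^{-θσ₃}`: the (1,2)-entry is multiplied by `e^{2θ}`
and the (2,1)-entry by `e^{-2θ}`. -/
def sigma3Conj (θ : ℂ) (A : Matrix (Fin 2) (Fin 2) ℂ) : Matrix (Fin 2) (Fin 2) ℂ :=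
  !![A 0 0, Complex.exp (2 * θ) * A 0 1; Complex.exp (-(2 * θ)) * A 1 0, A 1 1]

/-- U(y,t) for real-valued q. -/
def Umat (q : ℝ → ℝ → ℝ) (y t : ℝ) : Matrix (Fin 2) (Fin 2) ℂ :=
  !![0, (q y t : ℂ); (q (-y) (-t) : ℂ), 0]

/-- Ψ̃(x,t,k) = Λ conj(Ψ(-x,-t,-k)) Λ⁻¹. -/
def PsiTilde (Ψ : ℝ → ℝ → ℝ → Matrix (Fin 2) (Fin 2) ℂ) (x t k : ℝ) :
    Matrix (Fin 2) (Fin 2) ℂ :=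
  Lam * (Matrix.of fun i j => starRingEnd ℂ (Ψ (-x) (-t) (-k) i j)) * LamInv

/-! The map `A ↦ Λ Ā Λ⁻¹` is multiplicative, additive and fixes `I`; it commutes with
entrywise integration, turns `e^{θσ̂₃}` into `e^{-θ̄σ̂₃}` (conjugation by `Λ` swaps the two
diagonal entries), and sends `U(-y,-t)` to `-U(y,t)` because `q` is real. Applying it to the
Volterra equation at `(-x,-t,-k)` and substituting `y ↦ -y` gives the companion equation. -/

def lamConj (A : Matrix (Fin 2) (Fin 2) ℂ) : Matrix (Fin 2) (Fin 2) ℂ :=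
  Lam * A.map (starRingEnd ℂ) * LamInv

theorem PsiTilde_eq_lamConj (Ψ : ℝ → ℝ → ℝ → Matrix (Fin 2) (Fin 2) ℂ) (x t k : ℝ) :
    PsiTilde Ψ x t k = lamConj (Ψ (-x) (-t) (-k)) := rfl

theorem lamConj_eq_entries (A : Matrix (Fin 2) (Fin 2) ℂ) :
    lamConj A = !![starRingEnd ℂ (A 1 1), -starRingEnd ℂ (A 1 0);
      -starRingEnd ℂ (A 0 1), starRingEnd ℂ (A 0 0)] := by
  ext i j
  fin_cases i <;> fin_cases j <;>
    simp [lamConj, Lam, LamInv, Matrix.mul_apply, Matrix.vecMul, dotProduct, Fin.sum_univ_two]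

theorem lamConj_one : lamConj 1 = 1 := by
  rw [lamConj_eq_entries]
  ext i j
  fin_cases i <;> fin_cases j <;> simp

theorem lamConj_add (A B : Matrix (Fin 2) (Fin 2) ℂ) :
    lamConj (A + B) = lamConj A + lamConj B := by
  simp only [lamConj_eq_entries]
  ext i j
  fin_cases i <;> fin_cases j <;> simp [add_comm]

theorem lamConj_mul (A B : Matrix (Fin 2) (Fin 2) ℂ) :
    lamConj (A * B) = lamConj A * lamConj B := by
  simp only [lamConj_eq_entries]
  ext i j
  fin_cases i <;> fin_cases j <;> simp [Matrix.mul_apply, Fin.sum_univ_two, add_comm]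

theorem lamConj_sigma3Conj (θ : ℂ) (A : Matrix (Fin 2) (Fin 2) ℂ) :
    lamConj (sigma3Conj θ A) = sigma3Conj (-starRingEnd ℂ θ) (lamConj A) := by
  simp only [lamConj_eq_entries, sigma3Conj]
  ext i j
  fin_cases i <;> fin_cases j <;> simp [← Complex.exp_conj, map_ofNat]

theorem lamConj_Umat_neg (q : ℝ → ℝ → ℝ) (y t : ℝ) :
    lamConj (Umat q (-y) (-t)) = -Umat q y t := by
  simp only [lamConj_eq_entries, Umat]
  ext i j
  fin_cases i <;> fin_cases j <;> simp

theorem sigma3Conj_neg (θ : ℂ) (A : Matrix (Fin 2) (Fin 2) ℂ) :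
    sigma3Conj θ (-A) = -sigma3Conj θ A := by
  ext i j
  fin_cases i <;> fin_cases j <;> simp [sigma3Conj]

theorem lamConj_integral_apply {α : Type*} [MeasurableSpace α] (μ : Measure α)
    (F : α → Matrix (Fin 2) (Fin 2) ℂ) (i j : Fin 2) :
    lamConj (Matrix.of fun i j => ∫ a, F a i j ∂μ) i j = ∫ a, lamConj (F a) i j ∂μ := by
  fin_cases i <;> fin_cases j <;> simp [lamConj_eq_entries, integral_neg, integral_conj]

theorem integral_Iic_neg_eq_integral_Ici_comp_neg {E : Type*} [NormedAddCommGroup E]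
    [NormedSpace ℝ E] (c : ℝ) (f : ℝ → E) :
    ∫ y in Iic (-c), f y = ∫ y in Ici c, f (-y) := by
  rw [integral_Ici_eq_integral_Ioi, integral_comp_neg_Ioi]

theorem volterra_conj_symmetry_general (q : ℝ → ℝ → ℝ)
    (Ψ : ℝ → ℝ → ℝ → Matrix (Fin 2) (Fin 2) ℂ)
    (hvolt : ∀ (x t k : ℝ) (i j : Fin 2),
      Ψ x t k i j = (1 : Matrix (Fin 2) (Fin 2) ℂ) i j +
        ∫ y in Iic x, (sigma3Conj (Complex.I * (k : ℂ) * ((y : ℂ) - (x : ℂ)))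
          (Umat q y t * Ψ y t k)) i j) :
    ∀ (x t k : ℝ) (i j : Fin 2),
      PsiTilde Ψ x t k i j = (1 : Matrix (Fin 2) (Fin 2) ℂ) i j -
        ∫ y in Ici x, (sigma3Conj (Complex.I * (k : ℂ) * ((y : ℂ) - (x : ℂ)))
          (Umat q y t * PsiTilde Ψ y t k)) i j := by
  intro x t k i j
  have hΨ : Ψ (-x) (-t) (-k) = 1 + Matrix.of fun i j => ∫ y in Ici x,
      (sigma3Conj (Complex.I * ((-k : ℝ) : ℂ) * (((-y : ℝ) : ℂ) - ((-x : ℝ) : ℂ)))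
        (Umat q (-y) (-t) * Ψ (-y) (-t) (-k))) i j := by
    ext i j
    rw [hvolt, integral_Iic_neg_eq_integral_Ici_comp_neg]
    rfl
  have hphase (y : ℝ) :
      -starRingEnd ℂ (Complex.I * ((-k : ℝ) : ℂ) * (((-y : ℝ) : ℂ) - ((-x : ℝ) : ℂ))) =
        Complex.I * (k : ℂ) * ((y : ℂ) - (x : ℂ)) := by
    simp only [map_mul, map_sub, map_neg, Complex.conj_I, Complex.conj_ofReal, Complex.ofReal_neg]
    ring
  rw [PsiTilde_eq_lamConj, hΨ, lamConj_add, Matrix.add_apply, lamConj_one,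
    lamConj_integral_apply, sub_eq_add_neg, ← integral_neg]
  congr 2
  funext y
  simp only [lamConj_sigma3Conj, lamConj_mul, lamConj_Umat_neg, hphase, ← PsiTilde_eq_lamConj,
    Matrix.neg_mul, sigma3Conj_neg, Matrix.neg_apply]

/-- The conjugation symmetry used in (2.9): if Ψ solves the Volterra equation
(2.4a) then Λ·conj(Ψ(-x,-t,-k))·Λ⁻¹ solves the companion equation (2.4b). -/
theorem volterra_conj_symmetry (q : ℝ → ℝ → ℝ)
    (hint : ∀ t : ℝ, Integrable (fun y => q y t))
    (Ψ : ℝ → ℝ → ℝ → Matrix (Fin 2) (Fin 2) ℂ)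
    (hbdd : ∃ M : ℝ, ∀ (x t k : ℝ) (i j : Fin 2), ‖Ψ x t k i j‖ ≤ M)
    (hcont : ∀ i j : Fin 2, Continuous fun p : ℝ × ℝ × ℝ => Ψ p.1 p.2.1 p.2.2 i j)
    (hvolt : ∀ (x t k : ℝ) (i j : Fin 2),
      Ψ x t k i j = (1 : Matrix (Fin 2) (Fin 2) ℂ) i j +
        ∫ y in Iic x, (sigma3Conj (Complex.I * (k : ℂ) * ((y : ℂ) - (x : ℂ)))
          (Umat q y t * Ψ y t k)) i j) :
    ∀ (x t k : ℝ) (i j : Fin 2),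
      PsiTilde Ψ x t k i j = (1 : Matrix (Fin 2) (Fin 2) ℂ) i j -
        ∫ y in Ici x, (sigma3Conj (Complex.I * (k : ℂ) * ((y : ℂ) - (x : ℂ)))
          (Umat q y t * PsiTilde Ψ y t k)) i j :=
  volterra_conj_symmetry_general q Ψ hvolt
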